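/- Every beta-conjugate of a Parry number β ∈ (1,3) which is not an algebraic unit is a simple root of the Parry polynomial n*_β of β. -/

import Mathlib

open Polynomial

noncomputable section

/-- Iterates `T_β^j(1)` of the beta-transformation `T_β(x) = βx - ⌊βx⌋` at `1`. -/
def Titer (β : ℝ) : ℕ → ℝ
  | 0 => 1
  | j + 1 => Int.fract (β * Titer β j)

/-- The digits `t_i = ⌊β · T_β^{i-1}(1)⌋` for `i ≥ 1` (junk value `0` at `i = 0`). -/
def tdigit (β : ℝ) : ℕ → ℤ
  | 0 => 0
  | i + 1 => ⌊β * Titer β i⌋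

/-- The Parry polynomial of a simple Parry number with `d_β(1) = 0.t₁…t_m`. -/
def simpleParryPoly (β : ℝ) (m : ℕ) : Polynomial ℤ :=
  X ^ m - ∑ i ∈ Finset.Icc 1 m, C (tdigit β i) * X ^ (m - i)

/-- The Parry polynomial of a non-simple Parry number with preperiod `m`, period `p+1`. -/
def nonsimpleParryPoly (β : ℝ) (m p : ℕ) : Polynomial ℤ :=
  X ^ (m + p + 1) - ∑ i ∈ Finset.Icc 1 (m + p + 1), C (tdigit β i) * X ^ (m + p + 1 - i)
    - X ^ m + ∑ i ∈ Finset.Icc 1 m, C (tdigit β i) * X ^ (m - i)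

/-- `β` is a Parry number (non-integer, `> 1`, with eventually periodic digit sequence
`(t_i)`) and `P` is its Parry polynomial: either `β` is a simple Parry number with
`d_β(1) = 0.t₁…t_m` (`m` maximal with `t_m ≠ 0`), or `β` is a non-simple Parry number with
minimal preperiod length `m ≥ 0` and minimal period length `p+1 ≥ 1`. -/
def IsParryPolyOf (β : ℝ) (P : Polynomial ℤ) : Prop :=
  1 < β ∧ (∀ n : ℤ, (n : ℝ) ≠ β) ∧
  ((∃ m : ℕ, 1 ≤ m ∧ tdigit β m ≠ 0 ∧ (∀ i, m < i → tdigit β i = 0) ∧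
      P = simpleParryPoly β m) ∨
   ((∀ N : ℕ, ∃ i, N < i ∧ tdigit β i ≠ 0) ∧
    ∃ m p : ℕ,
      (∀ i, m + 1 ≤ i → tdigit β (i + (p + 1)) = tdigit β i) ∧
      (∀ q : ℕ, 0 < q → (∃ m', ∀ i, m' + 1 ≤ i → tdigit β (i + q) = tdigit β i) →
        p + 1 ≤ q) ∧
      (∀ m', m' < m → ¬ (∀ i, m' + 1 ≤ i → tdigit β (i + (p + 1)) = tdigit β i)) ∧
      P = nonsimpleParryPoly β m p))

/-- The absolute value of the algebraic norm of `x`: the product of the absolute values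
of all the roots (the conjugates of `x`) of its minimal polynomial. -/
def algNormAbs (x : ℂ) : ℝ :=
  ((((minpoly ℚ x).map (algebraMap ℚ ℂ)).roots).map (fun z => ‖z‖)).prod

lemma Titer_mem (β : ℝ) : ∀ j, 0 ≤ Titer β j ∧ Titer β j ≤ 1
  | 0 => by simp [Titer]
  | j + 1 => ⟨Int.fract_nonneg _, (Int.fract_lt_one _).le⟩

lemma tdigit_bounds {β : ℝ} (hβ1 : 1 < β) (hβ3 : β < 3) (i : ℕ) :
    0 ≤ tdigit β i ∧ tdigit β i ≤ 2 := by
  cases i with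
  | zero => simp [tdigit]
  | succ k =>
    have hβ0 : 0 < β := lt_trans one_pos hβ1
    obtain ⟨h0, h1⟩ := Titer_mem β k
    constructor
    · exact Int.floor_nonneg.mpr (mul_nonneg hβ0.le h0)
    · have : β * Titer β k < 3 := lt_of_le_of_lt (by nlinarith) hβ3
      have := Int.floor_lt.mpr (by exact_mod_cast this : β * Titer β k < ((3:ℤ):ℝ))
      simpa [tdigit] using by omega

lemma sumCoeff (t : ℕ → ℤ) (k : ℕ) (hk : 1 ≤ k) :
    (∑ i ∈ Finset.Icc 1 k, C (t i) * X ^ (k - i)).coeff 0 = t k := by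
  rw [finset_sum_coeff, Finset.sum_eq_single k]
  · simp
  · intro i hi hne
    have hi' := Finset.mem_Icc.mp hi
    rw [coeff_C_mul, coeff_X_pow, if_neg (by omega : ¬(0:ℕ) = k - i), mul_zero]
  · intro h; exact absurd (Finset.mem_Icc.mpr ⟨hk, le_refl k⟩) h

lemma degLT (t : ℕ → ℤ) (k n N : ℕ) (h : ∀ i, 1 ≤ i → n - i < N) :
    (∑ i ∈ Finset.Icc 1 k, C (t i) * X ^ (n - i)).degree < (N : WithBot ℕ) := by
  apply lt_of_le_of_lt (degree_sum_le _ _)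
  rw [Finset.sup_lt_iff (by exact_mod_cast WithBot.bot_lt_coe N)]
  intro i hi
  refine lt_of_le_of_lt (degree_C_mul_X_pow_le _ _) ?_
  exact_mod_cast h i (Finset.mem_Icc.mp hi).1

lemma simple_monic (β : ℝ) (m : ℕ) (hm : 1 ≤ m) : (simpleParryPoly β m).Monic :=
  monic_X_pow_sub (degLT _ _ _ _ (fun i hi => by omega))

lemma simple_coeff0 (β : ℝ) (m : ℕ) (hm : 1 ≤ m) :
    (simpleParryPoly β m).coeff 0 = -tdigit β m := by
  rw [simpleParryPoly, coeff_sub, coeff_X_pow, if_neg (by omega : ¬(0:ℕ) = m),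
    sumCoeff _ _ hm, zero_sub]

lemma nonsimple_eq (β : ℝ) (m p : ℕ) :
    nonsimpleParryPoly β m p = X ^ (m + p + 1) -
      ((∑ i ∈ Finset.Icc 1 (m + p + 1), C (tdigit β i) * X ^ (m + p + 1 - i))
        + X ^ m - ∑ i ∈ Finset.Icc 1 m, C (tdigit β i) * X ^ (m - i)) := by
  rw [nonsimpleParryPoly]; ring

lemma nonsimple_monic (β : ℝ) (m p : ℕ) : (nonsimpleParryPoly β m p).Monic := by
  rw [nonsimple_eq]
  apply monic_X_pow_sub
  apply lt_of_le_of_lt (degree_sub_le _ _)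
  apply max_lt
  · apply lt_of_le_of_lt (degree_add_le _ _)
    apply max_lt (degLT _ _ _ _ (fun i hi => by omega))
    rw [degree_X_pow]
    exact_mod_cast by omega
  · exact degLT _ _ _ _ (fun i hi => by omega)

lemma nonsimple_coeff0 (β : ℝ) (m p : ℕ) (hm : 1 ≤ m) :
    (nonsimpleParryPoly β m p).coeff 0 = -tdigit β (m + p + 1) + tdigit β m := by
  rw [nonsimpleParryPoly, coeff_add, coeff_sub, coeff_sub, coeff_X_pow, coeff_X_pow,
    if_neg (by omega : ¬(0:ℕ) = m + p + 1), if_neg (by omega : ¬(0:ℕ) = m),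
    sumCoeff _ _ (by omega), sumCoeff _ _ hm]
  ring

lemma nonsimple_coeff0' (β : ℝ) (p : ℕ) :
    (nonsimpleParryPoly β 0 p).coeff 0 = -tdigit β (p + 1) - 1 := by
  rw [nonsimpleParryPoly]
  simp only [zero_add, coeff_add, coeff_sub, coeff_X_pow,
    if_neg (by omega : ¬(0:ℕ) = p + 1), pow_zero]
  rw [sumCoeff _ _ (by omega)]
  simp

lemma key_mult (P : Polynomial ℤ) (hmonic : P.Monic) (hc0 : P.coeff 0 ≠ 0)
    (hc3 : |P.coeff 0| ≤ 3) (ξ : ℂ) (hroot : (P.map (Int.castRingHom ℂ)).IsRoot ξ)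
    (hnotunit : algNormAbs ξ ≠ 1) :
    Polynomial.rootMultiplicity ξ (P.map (Int.castRingHom ℂ)) = 1 := by
  set Pc := P.map (Int.castRingHom ℂ) with hPc
  have hPne : P ≠ 0 := fun h => hc0 (by simp [h])
  have hPcne : Pc ≠ 0 := by
    rw [hPc, Polynomial.map_ne_zero_iff (Int.cast_injective (α := ℂ))]
    exact hPne
  have hcompC : (algebraMap ℚ ℂ).comp (Int.castRingHom ℚ) = Int.castRingHom ℂ :=
    RingHom.ext_int _ _
  have haev : Polynomial.aeval ξ P = 0 := by
    rw [Polynomial.aeval_def, Polynomial.eval₂_eq_eval_map]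
    have : algebraMap ℤ ℂ = Int.castRingHom ℂ := RingHom.ext_int _ _
    rw [this]; exact hroot
  have hint : IsIntegral ℤ ξ := ⟨P, hmonic, haev⟩
  have hintQ : IsIntegral ℚ ξ := hint.tower_top
  have hξ0 : ξ ≠ 0 := by
    rintro rfl
    apply hc0
    have : Pc.eval 0 = 0 := hroot
    rw [hPc, Polynomial.eval_map, Polynomial.eval₂_at_zero] at this
    simpa using this
  refine le_antisymm ?_ ((rootMultiplicity_pos hPcne).mpr hroot)
  by_contra hgt
  push_neg at hgt
  have h2 : (X - C ξ) ^ 2 ∣ Pc :=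
    dvd_trans (pow_dvd_pow _ hgt) (Polynomial.pow_rootMultiplicity_dvd Pc ξ)
  obtain ⟨R, hR⟩ := h2
  have hd : Pc.derivative.eval ξ = 0 := by
    rw [hR, derivative_mul, derivative_pow]
    simp
  set PQ := P.map (Int.castRingHom ℚ) with hPQdef
  have hmapmap : PQ.map (algebraMap ℚ ℂ) = Pc := by
    rw [hPQdef, Polynomial.map_map, hcompC]
  set M := minpoly ℚ ξ with hM
  have hMdvd : M ∣ PQ := minpoly.dvd ℚ ξ (by
    rw [Polynomial.aeval_def, Polynomial.eval₂_eq_eval_map, hmapmap]; exact hroot)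
  have hMdvd' : M ∣ derivative PQ := minpoly.dvd ℚ ξ (by
    rw [Polynomial.aeval_def, Polynomial.eval₂_eq_eval_map, ← derivative_map, hmapmap]
    exact hd)
  have hMirr := minpoly.irreducible hintQ
  have hMne : M ≠ 0 := minpoly.ne_zero hintQ
  have hMdeg : 0 < M.natDegree := minpoly.natDegree_pos hintQ
  have hMd_ne : derivative M ≠ 0 := by
    intro h
    have := Polynomial.natDegree_eq_zero_of_derivative_eq_zero h
    omega
  obtain ⟨Q, hQ⟩ := hMdvd
  have hMM'Q : M ∣ derivative M * Q := by
    have h1 : M ∣ derivative PQ - M * derivative Q := dvd_sub hMdvd' (dvd_mul_right _ _)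
    rw [hQ, derivative_mul] at h1
    simpa using h1
  have hM2 : M ^ 2 ∣ PQ := by
    rcases (hMirr.prime.2.2 _ _ hMM'Q) with h | h
    · exact absurd (Polynomial.degree_le_of_dvd h hMd_ne)
        (not_le.mpr (Polynomial.degree_derivative_lt hMne))
    · obtain ⟨Q', rfl⟩ := h
      rw [hQ]; ring_nf; exact ⟨Q', by ring⟩
  set Mz := minpoly ℤ ξ with hMz
  have hMint : M = Mz.map (Int.castRingHom ℚ) := by
    have := minpoly.isIntegrallyClosed_eq_field_fractions ℚ ℂ hint
    simp only [Algebra.algebraMap_self, RingHom.id_apply] at this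
    rw [hM, this, hMz]
    norm_cast
  have hdvdZ : Mz ^ 2 ∣ P := by
    rw [← Polynomial.map_dvd_map (Int.castRingHom ℚ) Int.cast_injective
      ((minpoly.monic hint).pow 2)]
    rw [Polynomial.map_pow, ← hMint]
    exact hM2
  have hev : (Mz.eval 0) ^ 2 ∣ P.eval 0 := by
    obtain ⟨Q', rfl⟩ := hdvdZ
    rw [eval_mul, eval_pow]
    exact ⟨_, rfl⟩
  set Mc := M.map (algebraMap ℚ ℂ) with hMc
  have hMcmonic : Mc.Monic := (minpoly.monic hintQ).map _
  have hsplit : Mc.Splits :=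
    IsAlgClosed.splits Mc
  have hMzC : Mc = Mz.map (Int.castRingHom ℂ) := by
    rw [hMc, hMint, Polynomial.map_map, hcompC]
  have habs : ((|Mz.eval 0| : ℤ) : ℝ) = algNormAbs ξ := by
    have h1 : Mc.eval 0 = ((Mz.eval 0 : ℤ) : ℂ) := by
      rw [hMzC, Polynomial.eval_zero_map]; simp
    have h2 : ‖Mc.eval 0‖ = algNormAbs ξ := by
      conv_lhs => rw [hsplit.eq_prod_roots_of_monic hMcmonic]
      rw [eval_multiset_prod, Multiset.map_map, show ∀ m : Multiset ℂ, ‖m.prod‖ = (m.map (fun z => ‖z‖)).prod from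
        fun m => map_multiset_prod (normHom : ℂ →*₀ ℝ) m,
        Multiset.map_map]
      unfold algNormAbs
      rw [← hM, ← hMc]
      congr 1
      apply Multiset.map_congr rfl
      intro a _
      simp
    rw [← h2, h1]
    push_cast [Complex.norm_intCast]
    simp
  have hMz0ne : Mz.eval 0 ≠ 0 := by
    have h := minpoly.coeff_zero_ne_zero hintQ hξ0
    rw [← hM, hMint, coeff_map] at h
    rw [← coeff_zero_eq_eval_zero]
    intro h'
    exact h (by rw [h']; simp)
  have h1ne : |Mz.eval 0| ≠ 1 := by
    intro h
    apply hnotunit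
    rw [← habs, h]
    norm_num
  have h2le : 2 ≤ |Mz.eval 0| := by
    have := abs_pos.mpr hMz0ne
    omega
  have hdvdabs : (Mz.eval 0) ^ 2 ∣ |P.coeff 0| :=
    (dvd_abs _ _).mpr (by rwa [coeff_zero_eq_eval_zero])
  have hle := Int.le_of_dvd (abs_pos.mpr hc0) hdvdabs
  nlinarith [sq_abs (Mz.eval 0)]

/-- Every beta-conjugate of a Parry number `β ∈ (1,3)` which is not an algebraic unit
is a simple root of the Parry polynomial `n*_β`. -/
theorem betaConjugate_simple_of_lt_three (β : ℝ) (P : Polynomial ℤ)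
    (hP : IsParryPolyOf β P) (hβ3 : β < 3) (ξ : ℂ) (hroot : (P.map (Int.castRingHom ℂ)).IsRoot ξ)
    (hnotconj : (Polynomial.aeval ξ) (minpoly ℚ β) ≠ 0)
    (hnotunit : algNormAbs ξ ≠ 1) :
    Polynomial.rootMultiplicity ξ (P.map (Int.castRingHom ℂ)) = 1 := by
  obtain ⟨hβ1, -, hcase⟩ := hP
  have ht := tdigit_bounds hβ1 hβ3
  have key : P.Monic ∧ P.coeff 0 ≠ 0 ∧ |P.coeff 0| ≤ 3 := by
    rcases hcase with ⟨m, hm1, htm, -, rfl⟩ | ⟨-, m, p, hper, -, hmin, rfl⟩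
    · obtain ⟨h0, h2⟩ := ht m
      refine ⟨simple_monic β m hm1, ?_, ?_⟩
      · rw [simple_coeff0 β m hm1]
        simpa using htm
      · rw [simple_coeff0 β m hm1]
        exact abs_le.mpr ⟨by omega, by omega⟩
    · rcases Nat.eq_zero_or_pos m with rfl | hm
      · obtain ⟨h0, h2⟩ := ht (p + 1)
        refine ⟨nonsimple_monic β 0 p, ?_, ?_⟩ <;> rw [nonsimple_coeff0' β p]
        · omega
        · exact abs_le.mpr ⟨by omega, by omega⟩
      · have hneq : tdigit β (m + p + 1) ≠ tdigit β m := by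
          intro he
          apply hmin (m - 1) (by omega)
          intro i hi
          rcases eq_or_lt_of_le hi with h | h
          · have : i = m := by omega
            subst this
            rw [← add_assoc]
            exact he
          · exact hper i (by omega)
        obtain ⟨h0, h2⟩ := ht m
        obtain ⟨h0', h2'⟩ := ht (m + p + 1)
        refine ⟨nonsimple_monic β m p, ?_, ?_⟩ <;> rw [nonsimple_coeff0 β m p hm]
        · omega
        · exact abs_le.mpr ⟨by omega, by omega⟩
  obtain ⟨hmonic, hc0, hc3⟩ := key
  exact key_mult P hmonic hc0 hc3 ξ hroot hnotunit

end
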